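/- Let d ≥ 4 be an integer, m an integer with 1 ≤ m < d/2, 0 < κ < 1/2, R > 1, and c = 1/1000. For every x ∈ Λ (with Λ, Ω as in the context), |∫_Ω e^{i R x·ξ} dσ(ξ)| ≥ cos(1/100) · σ(Ω), where dσ is the surface measure on the unit sphere S^{d-1}. In particular |∫_Ω e^{i R x·ξ} dσ(ξ)| is comparable to σ(Ω) for all x ∈ Λ. -/

import Mathlib

open MeasureTheory Metric Real
open scoped ENNReal

/-- The vector in `ℝ^n` with integer coordinates `ℓ`. -/
noncomputable def intVec {n : ℕ} (ℓ : Fin n → ℤ) : EuclideanSpace ℝ (Fin n) :=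
  (EuclideanSpace.equiv (Fin n) ℝ).symm fun i => (ℓ i : ℝ)

/-- The first `m` coordinates `x'` of a vector `x ∈ ℝ^n`. -/
noncomputable def headV {n : ℕ} (m : ℕ) (h : m ≤ n) (x : EuclideanSpace ℝ (Fin n)) :
    EuclideanSpace ℝ (Fin m) :=
  (EuclideanSpace.equiv (Fin m) ℝ).symm fun i => x (Fin.castLE h i)

/-- The last `n - m` coordinates `x''` of a vector `x ∈ ℝ^n`. -/
noncomputable def tailV {n : ℕ} (m : ℕ) (x : EuclideanSpace ℝ (Fin n)) :
    EuclideanSpace ℝ (Fin (n - m)) :=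
  (EuclideanSpace.equiv (Fin (n - m)) ℝ).symm fun i =>
    x ⟨m + i, by have := i.isLt; omega⟩

lemma sum_split {d m : ℕ} (h : m ≤ d) (f : Fin d → ℝ) :
    ∑ i, f i = (∑ i : Fin m, f (Fin.castLE h i)) +
      ∑ i : Fin (d - m), f ⟨m + i, by have := i.isLt; omega⟩ := by
  have e : m + (d - m) = d := by omega
  have h1 : ∑ i, f i = ∑ j : Fin (m + (d - m)), f (Fin.cast e j) :=
    (Fintype.sum_equiv (finCongr e) _ f (fun j => rfl)).symm
  rw [h1, Fin.sum_univ_add]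
  exact congrArg₂ (· + ·)
    (Finset.sum_congr rfl fun i _ => congrArg f (Fin.ext rfl))
    (Finset.sum_congr rfl fun i _ => congrArg f (Fin.ext rfl))

lemma inner_split {d : ℕ} (m : ℕ) (h : m ≤ d) (x y : EuclideanSpace ℝ (Fin d)) :
    (inner ℝ x y : ℝ) = (inner ℝ (headV m h x) (headV m h y) : ℝ) +
      (inner ℝ (tailV m x) (tailV m y) : ℝ) := by
  simp only [PiLp.inner_apply, RCLike.inner_apply, conj_trivial]
  exact sum_split h fun i => y i * x i

lemma norm_sq_split {d : ℕ} (m : ℕ) (h : m ≤ d) (x : EuclideanSpace ℝ (Fin d)) :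
    ‖x‖ ^ 2 = ‖headV m h x‖ ^ 2 + ‖tailV m x‖ ^ 2 := by
  have := inner_split m h x x
  rwa [real_inner_self_eq_norm_sq, real_inner_self_eq_norm_sq,
    real_inner_self_eq_norm_sq] at this

lemma norm_tailV_le {d : ℕ} (m : ℕ) (h : m ≤ d) (x : EuclideanSpace ℝ (Fin d)) :
    ‖tailV m x‖ ≤ ‖x‖ := by
  have := norm_sq_split m h x
  nlinarith [norm_nonneg x, norm_nonneg (tailV m x), norm_nonneg (headV m h x)]

lemma inner_intVec {k : ℕ} (ℓ n : Fin k → ℤ) :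
    (inner ℝ (intVec ℓ) (intVec n) : ℝ) = ((∑ i, ℓ i * n i : ℤ) : ℝ) := by
  simp only [PiLp.inner_apply, RCLike.inner_apply, conj_trivial, intVec]
  push_cast
  exact Finset.sum_congr rfl fun i _ => mul_comm _ _

lemma continuous_headV {d m : ℕ} (h : m ≤ d) :
    Continuous (headV m h : EuclideanSpace ℝ (Fin d) → EuclideanSpace ℝ (Fin m)) :=
  (EuclideanSpace.equiv (Fin m) ℝ).symm.continuous.comp
    (continuous_pi fun i => (continuous_apply ((Fin.castLE h i) : Fin d)).comp
      (EuclideanSpace.equiv (Fin d) ℝ).continuous)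

lemma continuous_tailV {d : ℕ} (m : ℕ) :
    Continuous (tailV m : EuclideanSpace ℝ (Fin d) → EuclideanSpace ℝ (Fin (d - m))) :=
  (EuclideanSpace.equiv (Fin (d - m)) ℝ).symm.continuous.comp
    (continuous_pi fun i => (continuous_apply _).comp
      (EuclideanSpace.equiv (Fin d) ℝ).continuous)

/-- The set `Ω = [B^m(0, cR^{-1/2}) × (Γ + B^{d-m}(0, cR^{-1}))] ∩ S^{d-1}`, where
`Γ = {ω ∈ S^{d-m-1} : R^κ ω ∈ 2πℤ^{d-m}}` and `c = 1/1000`. -/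
noncomputable def OmegaS (d m : ℕ) (h : m ≤ d) (κ R : ℝ) :
    Set (EuclideanSpace ℝ (Fin d)) :=
  {ξ | ξ ∈ sphere (0 : EuclideanSpace ℝ (Fin d)) 1 ∧
    ‖headV m h ξ‖ < (1 / 1000) * R ^ (-(1 : ℝ) / 2) ∧
    ∃ n : Fin (d - m) → ℤ,
      ‖(2 * π * R ^ (-κ)) • intVec n‖ = 1 ∧
      ‖tailV m ξ - (2 * π * R ^ (-κ)) • intVec n‖ < (1 / 1000) * R ^ (-(1 : ℝ))}

lemma measurableSet_OmegaS (d m : ℕ) (h : m ≤ d) (κ R : ℝ) :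
    MeasurableSet (OmegaS d m h κ R) := by
  have heq : OmegaS d m h κ R =
      (sphere (0 : EuclideanSpace ℝ (Fin d)) 1 ∩
        {ξ | ‖headV m h ξ‖ < (1 / 1000) * R ^ (-(1 : ℝ) / 2)}) ∩
      ⋃ n : Fin (d - m) → ℤ,
        ({ξ | ‖(2 * π * R ^ (-κ)) • intVec n‖ = 1} ∩
         {ξ | ‖tailV m ξ - (2 * π * R ^ (-κ)) • intVec n‖ < (1 / 1000) * R ^ (-(1 : ℝ))}) := by
    ext ξ
    simp only [OmegaS, Set.mem_setOf_eq, Set.mem_inter_iff, Set.mem_iUnion]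
    tauto
  rw [heq]
  refine (isClosed_sphere.measurableSet.inter ?_).inter
    (MeasurableSet.iUnion fun n => (MeasurableSet.const _).inter ?_)
  · exact (isOpen_lt (continuous_norm.comp (continuous_headV h)) continuous_const).measurableSet
  · exact (isOpen_lt (continuous_norm.comp ((continuous_tailV m).sub continuous_const))
      continuous_const).measurableSet

/-- The set `Λ = [B^m(0, cR^{-1/2}) × (R^{κ-1}ℤ^{d-m} + B^{d-m}(0, cR^{-1}))] ∩ B^d(0,1)`,
with `c = 1/1000`. -/
noncomputable def LambdaS (d m : ℕ) (h : m ≤ d) (κ R : ℝ) :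
    Set (EuclideanSpace ℝ (Fin d)) :=
  {x | x ∈ ball (0 : EuclideanSpace ℝ (Fin d)) 1 ∧
    ‖headV m h x‖ < (1 / 1000) * R ^ (-(1 : ℝ) / 2) ∧
    ∃ ℓ : Fin (d - m) → ℤ,
      ‖tailV m x - R ^ (κ - 1) • intVec ℓ‖ < (1 / 1000) * R ^ (-(1 : ℝ))}

lemma cos_bound {d m : ℕ} (h : m ≤ d) {κ R : ℝ} (hR : 1 < R)
    {x ξ : EuclideanSpace ℝ (Fin d)} (hx : x ∈ LambdaS d m h κ R)
    (hξ : ξ ∈ OmegaS d m h κ R) :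
    Real.cos (1 / 100) ≤ Real.cos (R * (inner ℝ x ξ : ℝ)) := by
  obtain ⟨hx1, hx2, ℓ, hx3⟩ := hx
  obtain ⟨hξ1, hξ2, n, hn1, hn2⟩ := hξ
  rw [mem_ball_zero_iff] at hx1
  set r1 := R ^ (-(1 : ℝ) / 2) with hr1def
  set r2 := R ^ (-(1 : ℝ)) with hr2def
  have hR0 : (0 : ℝ) < R := lt_trans one_pos hR
  have hr1pos : 0 < r1 := rpow_pos_of_pos hR0 _
  have hr2pos : 0 < r2 := rpow_pos_of_pos hR0 _
  have hr2le : r2 ≤ 1 := rpow_le_one_of_one_le_of_nonpos hR.le (by norm_num)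
  have hRr2 : R * r2 = 1 := by
    rw [hr2def, show (-(1:ℝ)) = (-1 : ℝ) by norm_num, Real.rpow_neg_one]
    exact mul_inv_cancel₀ hR0.ne'
  have hr11 : r1 * r1 = r2 := by
    rw [hr1def, hr2def, ← Real.rpow_add hR0]; norm_num
  set a := R ^ (κ - 1) • intVec ℓ with hadef
  set b := (2 * π * R ^ (-κ)) • intVec n with hbdef
  set u := tailV m x - a with hudef
  set v := tailV m ξ - b with hvdef
  set k : ℤ := ∑ i, ℓ i * n i with hkdef
  have hna : ‖a‖ ≤ 1 + 1 / 1000 := by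
    have h1 : a = tailV m x - u := by rw [hudef]; abel
    have h2 : ‖tailV m x‖ ≤ ‖x‖ := norm_tailV_le m h x
    have h3 := norm_sub_le (tailV m x) u
    rw [← h1] at h3
    nlinarith
  have hab : R * (inner ℝ a b : ℝ) = (k : ℝ) * (2 * π) := by
    rw [hadef, hbdef, real_inner_smul_left, real_inner_smul_right, inner_intVec, ← hkdef]
    have h1 : R ^ (κ - 1) * R ^ (-κ) = r2 := by
      rw [hr2def, ← Real.rpow_add hR0, show κ - 1 + -κ = -(1:ℝ) by ring]
    have h2 : R * (R ^ (κ - 1) * (2 * π * R ^ (-κ) * (k : ℝ)))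
        = (R * (R ^ (κ - 1) * R ^ (-κ))) * (2 * π * (k : ℝ)) := by ring
    rw [h2, h1, hRr2, one_mul]; ring
  have hsplit : R * (inner ℝ x ξ : ℝ) =
      (R * (inner ℝ (headV m h x) (headV m h ξ) : ℝ) +
        (R * (inner ℝ u b : ℝ) + R * (inner ℝ a v : ℝ) + R * (inner ℝ u v : ℝ))) +
      (k : ℝ) * (2 * π) := by
    rw [inner_split m h x ξ]
    have hxt : tailV m x = u + a := by rw [hudef]; abel
    have hξt : tailV m ξ = v + b := by rw [hvdef]; abel
    rw [hxt, hξt, inner_add_left, inner_add_right, inner_add_right]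
    push_cast
    linear_combination hab
  have cauchy := fun (y z : EuclideanSpace ℝ (Fin d)) => abs_real_inner_le_norm y z
  have e1 : |R * (inner ℝ (headV m h x) (headV m h ξ) : ℝ)| ≤ 1 / 1000 * (1 / 1000) := by
    calc |R * (inner ℝ (headV m h x) (headV m h ξ) : ℝ)|
        = R * |(inner ℝ (headV m h x) (headV m h ξ) : ℝ)| := by
          rw [abs_mul, abs_of_pos hR0]
      _ ≤ R * ((1 / 1000 * r1) * (1 / 1000 * r1)) := by
          refine mul_le_mul_of_nonneg_left ?_ hR0.le
          exact le_trans (abs_real_inner_le_norm _ _)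
            (mul_le_mul hx2.le hξ2.le (norm_nonneg _) (by positivity))
      _ = (1 / 1000 * (1 / 1000)) * (R * (r1 * r1)) := by ring
      _ = 1 / 1000 * (1 / 1000) := by rw [hr11, hRr2, mul_one]
  have e2 : |R * (inner ℝ u b : ℝ)| ≤ 1 / 1000 := by
    calc |R * (inner ℝ u b : ℝ)| = R * |(inner ℝ u b : ℝ)| := by rw [abs_mul, abs_of_pos hR0]
      _ ≤ R * ((1 / 1000 * r2) * 1) := by
          refine mul_le_mul_of_nonneg_left ?_ hR0.le
          refine le_trans (abs_real_inner_le_norm _ _) ?_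
          rw [hn1]
          exact mul_le_mul hx3.le le_rfl zero_le_one (by positivity)
      _ = 1 / 1000 * (R * r2) := by ring
      _ = 1 / 1000 := by rw [hRr2, mul_one]
  have e3 : |R * (inner ℝ a v : ℝ)| ≤ (1 + 1 / 1000) * (1 / 1000) := by
    calc |R * (inner ℝ a v : ℝ)| = R * |(inner ℝ a v : ℝ)| := by rw [abs_mul, abs_of_pos hR0]
      _ ≤ R * ((1 + 1 / 1000) * (1 / 1000 * r2)) := by
          refine mul_le_mul_of_nonneg_left ?_ hR0.le
          exact le_trans (abs_real_inner_le_norm _ _)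
            (mul_le_mul hna hn2.le (norm_nonneg _) (by positivity))
      _ = ((1 + 1 / 1000) * (1 / 1000)) * (R * r2) := by ring
      _ = (1 + 1 / 1000) * (1 / 1000) := by rw [hRr2, mul_one]
  have e4 : |R * (inner ℝ u v : ℝ)| ≤ 1 / 1000 * (1 / 1000) := by
    calc |R * (inner ℝ u v : ℝ)| = R * |(inner ℝ u v : ℝ)| := by rw [abs_mul, abs_of_pos hR0]
      _ ≤ R * ((1 / 1000 * r2) * (1 / 1000 * r2)) := by
          refine mul_le_mul_of_nonneg_left ?_ hR0.le
          exact le_trans (abs_real_inner_le_norm _ _)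
            (mul_le_mul hx3.le hn2.le (norm_nonneg _) (by positivity))
      _ = (1 / 1000 * (1 / 1000)) * r2 * (R * r2) := by ring
      _ = (1 / 1000 * (1 / 1000)) * r2 := by rw [hRr2, mul_one]
      _ ≤ 1 / 1000 * (1 / 1000) := by nlinarith
  set θ := R * (inner ℝ (headV m h x) (headV m h ξ) : ℝ) +
      (R * (inner ℝ u b : ℝ) + R * (inner ℝ a v : ℝ) + R * (inner ℝ u v : ℝ)) with hθdef
  have hθ : |θ| ≤ 1 / 100 := by
    have A := abs_add_le (R * (inner ℝ u b : ℝ) + R * (inner ℝ a v : ℝ)) (R * (inner ℝ u v : ℝ))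
    have B := abs_add_le (R * (inner ℝ u b : ℝ)) (R * (inner ℝ a v : ℝ))
    have C := abs_add_le (R * (inner ℝ (headV m h x) (headV m h ξ) : ℝ))
      (R * (inner ℝ u b : ℝ) + R * (inner ℝ a v : ℝ) + R * (inner ℝ u v : ℝ))
    rw [hθdef]
    linarith
  rw [hsplit, show ((k : ℝ)) * (2 * π) = ((k : ℝ)) * (2 * π) from rfl]
  rw [Real.cos_add_int_mul_two_pi, ← Real.cos_abs θ]
  exact Real.cos_le_cos_of_nonneg_of_le_pi (abs_nonneg θ)
    (by linarith [Real.pi_gt_three]) hθ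

/-- `c_α(μ) = sup_{x, r>0} μ(B(x,r)) / r^α`, valued in `ℝ≥0∞`. -/
noncomputable def cAlpha {d : ℕ} (α : ℝ) (μ : Measure (EuclideanSpace ℝ (Fin d))) : ℝ≥0∞ :=
  ⨆ (x : EuclideanSpace ℝ (Fin d)) (r : ℝ) (_ : 0 < r),
    μ (ball x r) / ENNReal.ofReal (r ^ α)

theorem stmt12 (d m : ℕ) (hd : 4 ≤ d) (hm1 : 1 ≤ m) (hm2 : 2 * m < d)
    (κ : ℝ) (hκ1 : 0 < κ) (hκ2 : κ < 1 / 2) (R : ℝ) (hR : 1 < R)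
    (x : EuclideanSpace ℝ (Fin d)) (hx : x ∈ LambdaS d m (by omega) κ R) :
    Real.cos (1 / 100) *
        ((μH[(d : ℝ) - 1] : Measure (EuclideanSpace ℝ (Fin d)))
          (OmegaS d m (by omega) κ R)).toReal ≤
      ‖∫ ξ in OmegaS d m (by omega) κ R,
          Complex.exp (Complex.I * ((R * (inner ℝ x ξ : ℝ) : ℝ) : ℂ))
          ∂(μH[(d : ℝ) - 1] : Measure (EuclideanSpace ℝ (Fin d)))‖ := by
  have hmd : m ≤ d := by omega
  set μ : Measure (EuclideanSpace ℝ (Fin d)) := μH[(d : ℝ) - 1] with hμdef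
  set Ω : Set (EuclideanSpace ℝ (Fin d)) := OmegaS d m hmd κ R with hΩdef
  set f : EuclideanSpace ℝ (Fin d) → ℂ :=
    fun ξ => Complex.exp (Complex.I * ((R * (inner ℝ x ξ : ℝ) : ℝ) : ℂ)) with hfdef
  show Real.cos (1 / 100) * (μ Ω).toReal ≤ ‖∫ ξ in Ω, f ξ ∂μ‖
  by_cases hfin : μ Ω = ∞
  · rw [hfin]
    simp only [ENNReal.toReal_top, mul_zero]
    exact norm_nonneg _
  · haveI : IsFiniteMeasure (μ.restrict Ω) :=
      ⟨by rw [Measure.restrict_apply_univ]; exact lt_top_iff_ne_top.2 hfin⟩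
    have hmeas : MeasurableSet Ω := measurableSet_OmegaS d m hmd κ R
    have hcont : Continuous f :=
      Complex.continuous_exp.comp (continuous_const.mul
        (Complex.continuous_ofReal.comp (continuous_const.mul
          (continuous_const.inner continuous_id))))
    have hint : IntegrableOn f Ω μ := by
      refine Integrable.mono' (integrable_const 1) hcont.aestronglyMeasurable.restrict
        (Filter.Eventually.of_forall fun ξ => ?_)
      simp [hfdef, Complex.norm_exp, Complex.mul_re]
    have hcos : IntegrableOn (fun ξ => Real.cos (R * (inner ℝ x ξ : ℝ))) Ω μ := by
      refine Integrable.mono' (integrable_const 1)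
        ((Real.continuous_cos.comp (continuous_const.mul
          (continuous_const.inner continuous_id))).aestronglyMeasurable.restrict)
        (Filter.Eventually.of_forall fun ξ => ?_)
      rw [Real.norm_eq_abs]
      exact Real.abs_cos_le_one _
    calc Real.cos (1 / 100) * (μ Ω).toReal
        ≤ ∫ ξ in Ω, Real.cos (R * (inner ℝ x ξ : ℝ)) ∂μ :=
          by have h0 := setIntegral_ge_of_const_le hmeas hfin
               (fun ξ hξ => cos_bound hmd hR hx hξ) hcos
             rw [smul_eq_mul, mul_comm] at h0
             exact h0
      _ = (∫ ξ in Ω, f ξ ∂μ).re := by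
          have h' := integral_re hint
          simp only [RCLike.re_to_complex] at h'
          rw [← h']
          exact integral_congr_ae (Filter.Eventually.of_forall fun ξ => by
            rw [hfdef]
            simp only
            rw [mul_comm Complex.I _, Complex.exp_ofReal_mul_I_re])
      _ ≤ ‖∫ ξ in Ω, f ξ ∂μ‖ := by
          exact Complex.re_le_norm _
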